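/- arXiv:0801.2263 — 3 statements merged into one kernel-verified Lean document; each statement's English description precedes it below -/
import Mathlib

section
/- Let (X_i)_{i∈ℤ} be a stationary process with values in a finite set E, (T_i)_{i∈ℤ} a regeneration scheme for (X_i), and f : E → ℝ (automatically bounded). Define i(n) = max{k ≥ 1 : T_k < n} if T_1 < n and i(n) = 0 otherwise. Then both boundary terms n^{−1/2} ∑_{i=0}^{T_1−1} f(X_i) and n^{−1/2} ∑_{i=T_{i(n)}}^{n−1} f(X_i) converge to 0 in probability as n → ∞. -/
open MeasureTheory ProbabilityTheory Filter Finset Topology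

open MeasureTheory ProbabilityTheory Filter Finset Topology

namespace Regen

variable {E : Type*} [Fintype E] [Nonempty E] [MeasurableSpace E] [MeasurableSingletonClass E]

/-- Pasts `ω_{-∞}^{-1}`, encoded so that index `n : ℕ` records the coordinate `ω_{-(n+1)}`. -/
abbrev Past (E : Type*) := ℕ → E

/-- A `g`-function: a probability kernel from pasts to the alphabet. -/
structure IsGFunction (g : E → Past E → ℝ) : Prop where
  nonneg : ∀ x ω, 0 ≤ g x ω
  measurable : ∀ x, Measurable (g x)
  sum_one : ∀ ω, ∑ x : E, g x ω = 1

/-- Continuity of a `g`-function (uniform continuity w.r.t. the product topology). -/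
def ContinuousG (g : E → Past E → ℝ) : Prop :=
  ∀ x : E, ∀ ε : ℝ, 0 < ε → ∃ n : ℕ, ∀ ω σ : Past E,
    (∀ i < n, ω i = σ i) → |g x ω - g x σ| < ε

/-- A `g`-function is bounded away from zero. -/
def BddAwayZero (g : E → Past E → ℝ) : Prop := ∃ c : ℝ, 0 < c ∧ ∀ x ω, c ≤ g x ω

/-- A regular `g`-function: continuous and bounded away from zero. -/
def RegularG (g : E → Past E → ℝ) : Prop := IsGFunction g ∧ ContinuousG g ∧ BddAwayZero g

/-- The sequence `a_k = inf_{σ ∈ E^{[-k,-1]}} ∑_{x ∈ E} inf_{ω ∈ E^{ℤ_{<-k}}} g(x | σω)`. -/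
noncomputable def aSeq (g : E → Past E → ℝ) (k : ℕ) : ℝ :=
  ⨅ σ : Fin k → E, ∑ x : E, ⨅ ω : Past E,
    g x (fun n => if h : n < k then σ ⟨n, h⟩ else ω (n - k))

/-- The `k`-th variation of a `g`-function. -/
noncomputable def varSeq (g : E → Past E → ℝ) (k : ℕ) : ℝ :=
  sSup {d : ℝ | ∃ x : E, ∃ ω σ : Past E, (∀ i < k, ω i = σ i) ∧ d = |g x ω - g x σ|}

/-- The shift on two-sided configurations. -/
def shift : (ℤ → E) → (ℤ → E) := fun ω i => ω (i + 1)

/-- The past `(ω_i)_{i ≤ -1}` of a two-sided configuration. -/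
def pastOf (ω : ℤ → E) : Past E := fun n => ω (-(n : ℤ) - 1)

/-- A shift-invariant probability measure `P` on `E^ℤ` is consistent with `g`. -/
def Consistent (g : E → Past E → ℝ) (P : Measure (ℤ → E)) : Prop :=
  MeasurePreserving (shift (E := E)) P P ∧
  ∀ (x : E) (h : (ℤ → E) → ℝ), Measurable h → (∃ M : ℝ, ∀ ω, |h ω| ≤ M) →
    (∀ ω σ : ℤ → E, (∀ i : ℤ, i < 0 → ω i = σ i) → h ω = h σ) →
    ∫ ω, h ω * g x (pastOf ω) ∂P = ∫ ω in {ω : ℤ → E | ω 0 = x}, h ω ∂P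

section Regeneration

variable {Ω : Type*} [MeasurableSpace Ω]

open scoped Classical in
/-- The block of the process `X` between the regeneration times `T i` and `T (i+1)`,
padded by `Sum.inr ()` outside of `[T i, T (i+1))`. -/
noncomputable def block (T : ℤ → Ω → ℤ) (X : ℤ → Ω → E) (i : ℤ) (ω : Ω) : ℕ → E ⊕ Unit :=
  fun n => if (n : ℤ) < T (i + 1) ω - T i ω then Sum.inl (X (T i ω + n) ω) else Sum.inr ()

open scoped Classical in
/-- The process together with the renewal set, as a single `(E × Prop)`-valued process. -/
noncomputable def jointProc (T : ℤ → Ω → ℤ) (X : ℤ → Ω → E) (ω : Ω) : ℤ → E × Prop :=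
  fun t => (X t ω, ∃ i : ℤ, T i ω = t)

/-- A regeneration scheme for a stationary process `X`, as produced by the
Comets–Fernández–Ferrari construction. -/
structure RegenScheme (P : Measure Ω) (X : ℤ → Ω → E) where
  T : ℤ → Ω → ℤ
  measT : ∀ i, Measurable (T i)
  mono : ∀ᵐ ω ∂P, StrictMono fun i => T i ω
  T0_le : ∀ᵐ ω ∂P, T 0 ω ≤ 0
  T1_pos : ∀ᵐ ω ∂P, 0 < T 1 ω
  incr_indep : iIndepFun
    (fun (i : ℕ) (ω : Ω) => T ((i : ℤ) + 2) ω - T ((i : ℤ) + 1) ω) P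
  incr_ident : ∀ i : ℕ, IdentDistrib (fun ω => T ((i : ℤ) + 2) ω - T ((i : ℤ) + 1) ω)
    (fun ω => T 2 ω - T 1 ω) P P
  incr_int : Integrable (fun ω => ((T 2 ω - T 1 ω : ℤ) : ℝ)) P
  one_le_mean : 1 ≤ ∫ ω, ((T 2 ω - T 1 ω : ℤ) : ℝ) ∂P
  size_bias : ∀ k : ℕ, 1 ≤ k →
    (P {ω | T 1 ω - T 0 ω = (k : ℤ)}).toReal
      = (k : ℝ) * (P {ω | T 2 ω - T 1 ω = (k : ℤ)}).toReal
        / ∫ ω, ((T 2 ω - T 1 ω : ℤ) : ℝ) ∂P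
  joint_stationary : Measure.map (fun (z : ℤ → E × Prop) (t : ℤ) => z (t + 1))
      (Measure.map (jointProc T X) P) = Measure.map (jointProc T X) P
  blocks_indep : iIndepFun (fun i : ℤ => block T X i) P
  blocks_ident : ∀ i j : ℤ, i ≠ 0 → j ≠ 0 →
    IdentDistrib (block T X i) (block T X j) P P

/-- Mean length of a regeneration block. -/
noncomputable def RegenScheme.mean {P : Measure Ω} {X : ℤ → Ω → E}
    (R : RegenScheme P X) : ℝ :=
  ∫ ω, ((R.T 2 ω - R.T 1 ω : ℤ) : ℝ) ∂P

/-- The sum of `f` over the block `[T 1, T 2)`. -/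
noncomputable def RegenScheme.blockSum {P : Measure Ω} {X : ℤ → Ω → E}
    (R : RegenScheme P X) (f : E → ℝ) (ω : Ω) : ℝ :=
  ∑ i ∈ Finset.Ico (R.T 1 ω) (R.T 2 ω), f (X i ω)

/-- The limiting variance `σ² = E((∑_{i=T_1}^{T_2-1} f(X_i))²) / E(T_2 - T_1)`. -/
noncomputable def RegenScheme.var {P : Measure Ω} {X : ℤ → Ω → E}
    (R : RegenScheme P X) (f : E → ℝ) : ℝ :=
  (∫ ω, (R.blockSum f ω) ^ 2 ∂P) / R.mean

/-- `i(n) = max {k ≥ 1 : T k < n}` if `T 1 < n`, and `0` otherwise. -/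
noncomputable def RegenScheme.iN {P : Measure Ω} {X : ℤ → Ω → E}
    (R : RegenScheme P X) (n : ℕ) (ω : Ω) : ℤ :=
  if R.T 1 ω < (n : ℤ) then sSup {k : ℤ | 1 ≤ k ∧ R.T k ω < (n : ℤ)} else 0

end Regeneration

/-- Convergence in distribution of real random variables to the centered Gaussian law of
variance `v` (with `N(0,0) = δ_0`), tested against bounded continuous functions. -/
def TendstoGaussian {Ω : Type*} [MeasurableSpace Ω] (P : Measure Ω)
    (Y : ℕ → Ω → ℝ) (v : NNReal) : Prop :=
  ∀ φ : BoundedContinuousFunction ℝ ℝ,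
    Tendsto (fun n => ∫ ω, φ (Y n ω) ∂P) atTop (𝓝 (∫ x, φ x ∂(gaussianReal 0 v)))

/-- `(Y n)_{n ≥ 1}` is bounded in probability. -/
def BoundedInProb {Ω : Type*} [MeasurableSpace Ω] (P : Measure Ω)
    (Y : ℕ → Ω → ℝ) : Prop :=
  ∀ ε : ℝ, 0 < ε → ∃ K : ℝ, ∀ n : ℕ, 1 ≤ n → (P {ω | K < |Y n ω|}).toReal < ε

/-- Normalized partial sums `S_n/√n` of `f` along the process `X`. -/
noncomputable def normSum {Ω : Type*} (X : ℤ → Ω → E) (f : E → ℝ) (n : ℕ) (ω : Ω) : ℝ :=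
  (∑ i ∈ Finset.range n, f (X (i : ℤ) ω)) / Real.sqrt n

end Regen

/-! Both boundary sums are bounded by `∑ y, |f y|` times the number of their terms, so it
suffices that these lengths are bounded in probability: dividing by `√n` then sends them to `0`.
The initial length `T₁` is a single random variable. The final one is the age `n - T_{i(n)}` of
the renewal process at time `n`; it exceeds `L` only if there is no renewal in `[n - L, n)`. By
joint stationarity of the process and its renewal set this has the probability of having no
renewal in `[-L, 0)`, which forces `T₋₁ < -L`. -/

namespace Regen

section BoundedInProbability

variable {Ω : Type*} [MeasurableSpace Ω] {μ : Measure Ω} [IsFiniteMeasure μ]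

lemma boundedInProb_const {Y : Ω → ℝ} (hY : Measurable Y) : BoundedInProb μ (fun _ => Y) := by
  intro ε hε
  have hlim : Tendsto (fun K : ℝ => μ {ω | K < |Y ω|}) atTop (𝓝 0) := by
    have hempty : (⋂ K : ℝ, {ω | K < |Y ω|}) = ∅ :=
      Set.eq_empty_of_forall_notMem fun ω hω =>
        lt_irrefl |Y ω| (Set.mem_iInter.mp hω |Y ω|)
    have h := tendsto_measure_iInter_atTop (μ := μ)
      (fun K => (measurableSet_lt measurable_const hY.abs).nullMeasurableSet)
      (fun K K' hKK' ω (hω : K' < |Y ω|) => show K < |Y ω| from hKK'.trans_lt hω)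
      ⟨0, measure_ne_top μ _⟩
    rw [hempty, measure_empty] at h
    exact h
  obtain ⟨K, hK⟩ :=
    ((ENNReal.tendsto_toReal ENNReal.zero_ne_top).comp hlim |>.eventually (gt_mem_nhds hε)).exists
  exact ⟨K, fun _ _ => hK⟩

lemma BoundedInProb.tendstoInMeasure_div_sqrt {Y Z : ℕ → Ω → ℝ} (hY : BoundedInProb μ Y)
    (C : ℝ) (hZ : ∀ n ω, |Z n ω| ≤ C * Y n ω) :
    TendstoInMeasure μ (fun n ω => Z n ω / Real.sqrt n) atTop (fun _ => 0) := by
  rw [tendstoInMeasure_iff_dist]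
  intro ε hε
  simp only [Real.dist_eq, sub_zero]
  rw [← ENNReal.tendsto_toReal_iff (fun _ => measure_ne_top μ _) ENNReal.zero_ne_top]
  refine tendsto_order.2 ⟨fun a ha => .of_forall fun _ => ha.trans_le ENNReal.toReal_nonneg,
    fun δ hδ => ?_⟩
  obtain ⟨K, hK⟩ := hY δ hδ
  have hsqrt : Tendsto (fun n : ℕ => Real.sqrt n) atTop atTop :=
    Real.tendsto_sqrt_atTop.comp tendsto_natCast_atTop_atTop
  filter_upwards [(hsqrt.const_div_atTop (|C| * K)).eventually (gt_mem_nhds hε),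
    eventually_ge_atTop 1] with n hsmall hn
  refine (ENNReal.toReal_mono (measure_ne_top μ _) (measure_mono fun ω hω => ?_)).trans_lt
    (hK n hn)
  by_contra hle
  have hYK : |Y n ω| ≤ K := not_lt.mp hle
  have hZK : |Z n ω| ≤ |C| * K := calc
    |Z n ω| ≤ C * Y n ω := hZ n ω
    _ ≤ |C * Y n ω| := le_abs_self _
    _ = |C| * |Y n ω| := abs_mul _ _
    _ ≤ |C| * K := mul_le_mul_of_nonneg_left hYK (abs_nonneg C)
  have : |Z n ω / Real.sqrt n| < ε := calc
    |Z n ω / Real.sqrt n| = |Z n ω| / Real.sqrt n := by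
      rw [abs_div, abs_of_nonneg (Real.sqrt_nonneg _)]
    _ ≤ |C| * K / Real.sqrt n := div_le_div_of_nonneg_right hZK (Real.sqrt_nonneg _)
    _ < ε := hsmall
  exact not_le.mpr this hω

end BoundedInProbability

lemma abs_sum_comp_le_mul_card {ι α : Type*} [Fintype α] (f : α → ℝ) (s : Finset ι)
    (x : ι → α) : |∑ i ∈ s, f (x i)| ≤ (∑ y, |f y|) * (#s : ℝ) := calc
  |∑ i ∈ s, f (x i)| ≤ ∑ i ∈ s, |f (x i)| := abs_sum_le_sum_abs _ _
  _ ≤ #s • ∑ y, |f y| := sum_le_card_nsmul _ _ _ fun i _ =>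
    single_le_sum (fun y _ => abs_nonneg (f y)) (mem_univ (x i))
  _ = (∑ y, |f y|) * (#s : ℝ) := by rw [nsmul_eq_mul, mul_comm]

lemma measure_preimage_shift_eq {β : Type*} [MeasurableSpace β] {ν : Measure (ℤ → β)}
    (hν : ν.map (fun z t => z (t + 1)) = ν) {S : Set (ℤ → β)} (hS : MeasurableSet S)
    (n : ℕ) :
    ν ((fun z t => z (t + n)) ⁻¹' S) = ν S := by
  have hshift : MeasurePreserving (fun (z : ℤ → β) t => z (t + 1)) ν ν :=
    ⟨measurable_pi_lambda _ fun t => measurable_pi_apply (t + 1), hν⟩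
  have hiter : (fun (z : ℤ → β) t => z (t + 1))^[n] = fun z t => z (t + n) := by
    induction n with
    | zero => ext z t; simp
    | succ k ih =>
      rw [Function.iterate_succ', ih]
      ext z t
      simp only [Function.comp_apply, Nat.cast_succ]
      congr 1
      ring
  rw [← hiter]
  exact (hshift.iterate n).measure_preimage hS.nullMeasurableSet

lemma sub_le_sub_of_strictMono {T : ℤ → ℤ} (hT : StrictMono T) {a b : ℤ} (hab : a ≤ b) :
    b - a ≤ T b - T a := by
  induction b, hab using Int.leInduction with
  | base => simp
  | succ b _ ih => have := hT (lt_add_one b); omega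

/-- No renewal in `[-L, 0)`, the second component being the renewal indicator of `jointProc`. -/
def renewalFree (α : Type*) (L : ℤ) : Set (ℤ → α × Prop) :=
  {z | ∀ t, -L ≤ t → t < 0 → ¬ (z t).2}

lemma measurableSet_renewalFree (α : Type*) [MeasurableSpace α] (L : ℤ) :
    MeasurableSet (renewalFree α L) := by
  have : renewalFree α L = ⋂ t, ⋂ (_ : -L ≤ t), ⋂ (_ : t < 0), {z | (z t).2}ᶜ := by
    ext z
    simp [renewalFree]
  rw [this]
  exact .iInter fun t => .iInter fun _ => .iInter fun _ =>
    (measurableSet_setOfPred.mpr (measurable_snd.comp (measurable_pi_apply t))).compl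

section RegenScheme

variable {E : Type*} [MeasurableSpace E] {Ω : Type*} [MeasurableSpace Ω] {P : Measure Ω}
  {X : ℤ → Ω → E} (R : RegenScheme P X)

lemma RegenScheme.measurable_jointProc (hXm : ∀ i, Measurable (X i)) :
    Measurable (jointProc R.T X) := by
  refine measurable_pi_lambda _ fun t => (hXm t).prodMk ?_
  refine measurableSet_setOfPred.mp ?_
  rw [Set.ofPred_exists]
  exact .iUnion fun i => R.measT i (measurableSet_singleton t)

lemma RegenScheme.T_le_T_iN {ω : Ω} (hmono : StrictMono fun i => R.T i ω) {n : ℕ} {i : ℤ}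
    (hi : R.T i ω < n) : R.T i ω ≤ R.T (R.iN n ω) ω := by
  unfold RegenScheme.iN
  split_ifs with hT1
  · have hbdd : BddAbove {k : ℤ | 1 ≤ k ∧ R.T k ω < n} :=
      ⟨n - R.T 1 ω + 1, fun k ⟨h1k, hk⟩ => by
        have := sub_le_sub_of_strictMono hmono h1k; omega⟩
    rcases le_or_gt 1 i with h1i | hi1
    · exact hmono.monotone (le_csSup hbdd ⟨h1i, hi⟩)
    · exact hmono.monotone ((by omega : i ≤ 1).trans (le_csSup hbdd ⟨le_rfl, hT1⟩))
  · have hi0 : i ≤ 0 := by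
      by_contra h
      exact hT1 ((hmono.monotone (by omega : (1 : ℤ) ≤ i)).trans_lt hi)
    exact hmono.monotone hi0

lemma RegenScheme.shift_jointProc_mem_renewalFree {ω : Ω}
    (hmono : StrictMono fun i => R.T i ω) {n : ℕ} {L : ℤ} (hL : L < n - R.T (R.iN n ω) ω) :
    (fun t => jointProc R.T X ω (t + n)) ∈ renewalFree E L := by
  rintro t hLt ht ⟨i, hi⟩
  have := R.T_le_T_iN hmono (n := n) (i := i) (by omega)
  omega

lemma RegenScheme.lt_neg_T_neg_one {ω : Ω} (hmono : StrictMono fun i => R.T i ω)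
    (hT0 : R.T 0 ω ≤ 0) {L : ℤ} (hfree : jointProc R.T X ω ∈ renewalFree E L) :
    L < -R.T (-1) ω := by
  have h : R.T (-1) ω < R.T 0 ω := hmono (by norm_num)
  by_contra hle
  exact hfree (R.T (-1) ω) (by omega) (by omega) ⟨-1, rfl⟩

lemma RegenScheme.boundedInProb_age [IsFiniteMeasure P] (hXm : ∀ i, Measurable (X i)) :
    BoundedInProb P (fun n ω => (#(Ico (R.T (R.iN n ω) ω) (n : ℤ)) : ℝ)) := by
  intro ε hε
  obtain ⟨K, hK⟩ := boundedInProb_const (μ := P)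
    (measurable_from_top.comp (R.measT (-1)) : Measurable fun ω => (R.T (-1) ω : ℝ)) ε hε
  refine ⟨⌈K⌉₊, fun n _ =>
    (ENNReal.toReal_mono (measure_ne_top P _) ?_).trans_lt (hK 1 le_rfl)⟩
  have hjoint := R.measurable_jointProc hXm
  have hshift : Measurable fun (z : ℤ → E × Prop) t => z (t + n) :=
    measurable_pi_lambda _ fun t => measurable_pi_apply _
  set W := renewalFree E (⌈K⌉₊ : ℤ)
  have hW : MeasurableSet W := measurableSet_renewalFree E _
  calc P {ω | (⌈K⌉₊ : ℝ) < |(#(Ico (R.T (R.iN n ω) ω) (n : ℤ)) : ℝ)|}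
      ≤ P (jointProc R.T X ⁻¹' ((fun z t => z (t + n)) ⁻¹' W)) := by
        refine measure_mono_ae (R.mono.mono fun ω hmono hω => ?_)
        refine R.shift_jointProc_mem_renewalFree hmono ?_
        change (⌈K⌉₊ : ℝ) < |_| at hω
        rw [Nat.abs_cast, Int.card_Ico] at hω
        have : (⌈K⌉₊ : ℤ) < ((n - R.T (R.iN n ω) ω).toNat : ℤ) := by exact_mod_cast hω
        omega
    _ = P.map (jointProc R.T X) ((fun z t => z (t + n)) ⁻¹' W) :=
        (Measure.map_apply hjoint (hshift hW)).symm
    _ = P.map (jointProc R.T X) W :=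
        measure_preimage_shift_eq R.joint_stationary hW n
    _ = P (jointProc R.T X ⁻¹' W) := Measure.map_apply hjoint hW
    _ ≤ P {ω | K < |(R.T (-1) ω : ℝ)|} := by
        refine measure_mono_ae ((R.mono.and R.T0_le).mono fun ω ⟨hmono, hT0⟩ hω => ?_)
        have : (⌈K⌉₊ : ℝ) < -(R.T (-1) ω : ℝ) := by
          exact_mod_cast R.lt_neg_T_neg_one hmono hT0 hω
        exact (Nat.le_ceil K).trans_lt (this.trans_le (neg_le_abs _))

end RegenScheme

end Regen

theorem boundary_terms_tendsto_zero_inProbability_general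
    {E : Type*} [Fintype E] [MeasurableSpace E]
    {Ω : Type*} [MeasurableSpace Ω] (P : Measure Ω) [IsProbabilityMeasure P]
    (X : ℤ → Ω → E) (hXm : ∀ i, Measurable (X i))
    (R : Regen.RegenScheme P X) (f : E → ℝ) :
    TendstoInMeasure P
        (fun (n : ℕ) ω => (∑ i ∈ Finset.Ico (0 : ℤ) (R.T 1 ω), f (X i ω)) / Real.sqrt n)
        atTop (fun _ => 0) ∧
      TendstoInMeasure P
        (fun (n : ℕ) ω =>
          (∑ i ∈ Finset.Ico (R.T (R.iN n ω) ω) (n : ℤ), f (X i ω)) / Real.sqrt n)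
        atTop (fun _ => 0) := by
  have hT1 : Measurable fun ω => (#(Ico (0 : ℤ) (R.T 1 ω)) : ℝ) :=
    (measurable_from_top (f := fun t : ℤ => (#(Ico 0 t) : ℝ))).comp (R.measT 1)
  exact ⟨(Regen.boundedInProb_const hT1).tendstoInMeasure_div_sqrt _
      fun _ ω => Regen.abs_sum_comp_le_mul_card f _ (X · ω),
    (R.boundedInProb_age hXm).tendstoInMeasure_div_sqrt _
      fun _ ω => Regen.abs_sum_comp_le_mul_card f _ (X · ω)⟩

/-- Lemma 1 of Maillard–Schöpfer: the boundary terms of the regenerative decomposition of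
`S_n/√n` vanish in probability. -/
theorem boundary_terms_tendsto_zero_inProbability
    {E : Type*} [Fintype E] [Nonempty E] [MeasurableSpace E] [MeasurableSingletonClass E]
    {Ω : Type*} [MeasurableSpace Ω] (P : Measure Ω) [IsProbabilityMeasure P]
    (X : ℤ → Ω → E) (hXm : ∀ i, Measurable (X i))
    (R : Regen.RegenScheme P X) (f : E → ℝ) :
    TendstoInMeasure P
        (fun (n : ℕ) ω => (∑ i ∈ Finset.Ico (0 : ℤ) (R.T 1 ω), f (X i ω)) / Real.sqrt n)
        atTop (fun _ => 0) ∧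
      TendstoInMeasure P
        (fun (n : ℕ) ω =>
          (∑ i ∈ Finset.Ico (R.T (R.iN n ω) ω) (n : ℤ), f (X i ω)) / Real.sqrt n)
        atTop (fun _ => 0) :=
  boundary_terms_tendsto_zero_inProbability_general P X hXm R f
end

section
/- Let E be a finite set and, for each integer k ≤ −1, let φ_k : E^{ℤ_{≤0}} → ℝ be a measurable function with ∑_{k≤−1} sup|φ_k| < ∞. Define the Gibbsian g-function g(ω_0 | ω_{−∞}^{−1}) = exp(−∑_{k≤−1} φ_k(ω_{−∞}^{0})) / ∑_{σ_0∈E} exp(−∑_{k≤−1} φ_k(ω_{−∞}^{−1} σ_0)). Then for every function h : E → ℝ and all pasts ω_{−∞}^{−1}, σ_{−∞}^{−1} ∈ E^{ℤ_{<0}}: |∑_{x∈E} h(x)(g(x | ω_{−∞}^{−1}) − g(x | σ_{−∞}^{−1}))| ≤ (sup_{x∈E} |h(x)|) · sup_{x∈E} |∑_{k≤−1} [φ_k(ω_{−∞}^{−1} x) − φ_k(σ_{−∞}^{−1} x)]|, where ω_{−∞}^{−1} x denotes the configuration on ℤ_{≤0} equal to ω on negative coordinates and to x at coordinate 0. -/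
open MeasureTheory ProbabilityTheory Filter Finset Topology

open MeasureTheory ProbabilityTheory Filter Finset Topology

/-- One-sided configurations `ω_{-∞}^0`: prepend the present value `x` to the past `ω`. -/
def consPast {E : Type*} (x : E) (ω : Regen.Past E) : ℕ → E :=
  fun n => match n with
  | 0 => x
  | m + 1 => ω m

/-! Interpolate between the two energies: `a_t = b + t (a - b)`. The derivative in `t` of the
Gibbs average of `h` under `exp (-a_t)` is minus the covariance of `h` and `a - b`, which
Cauchy–Schwarz bounds by `sup |h| · sup |a - b|`; the mean value theorem concludes. -/

section GibbsWeight

variable {E : Type*} [Fintype E]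

noncomputable def gibbsWeight (a : E → ℝ) (x : E) : ℝ :=
  Real.exp (-a x) / ∑ y, Real.exp (-a y)

theorem sum_exp_neg_pos [Nonempty E] (a : E → ℝ) : 0 < ∑ y, Real.exp (-a y) :=
  Finset.sum_pos (fun _ _ => Real.exp_pos _) Finset.univ_nonempty

theorem gibbsWeight_nonneg (a : E → ℝ) (x : E) : 0 ≤ gibbsWeight a x :=
  div_nonneg (Real.exp_pos _).le (Finset.sum_nonneg fun _ _ => (Real.exp_pos _).le)

theorem sum_gibbsWeight [Nonempty E] (a : E → ℝ) : ∑ x, gibbsWeight a x = 1 := by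
  simp only [gibbsWeight, ← Finset.sum_div, div_self (sum_exp_neg_pos a).ne']

theorem hasDerivAt_gibbsWeight_line [Nonempty E] (b d : E → ℝ) (x : E) (t : ℝ) :
    HasDerivAt (fun s => gibbsWeight (fun y => b y + s * d y) x)
      (gibbsWeight (fun y => b y + t * d y) x *
        (∑ y, gibbsWeight (fun y => b y + t * d y) y * d y - d x)) t := by
  have hexp : ∀ y, HasDerivAt (fun s => Real.exp (-(b y + s * d y)))
      (Real.exp (-(b y + t * d y)) * -d y) t := fun y => by
    simpa using (((hasDerivAt_id t).mul_const (d y)).const_add (b y)).neg.exp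
  have hZ := sum_exp_neg_pos fun y => b y + t * d y
  refine ((hexp x).div (HasDerivAt.fun_sum fun y _ => hexp y) hZ.ne').congr_deriv ?_
  simp only [gibbsWeight, div_mul_eq_mul_div, ← Finset.sum_div, mul_neg, Finset.sum_neg_distrib]
  field_simp
  ring

theorem sum_mul_sq_le_sq_of_abs_le {w f : E → ℝ} {B : ℝ} (hw : ∀ x, 0 ≤ w x)
    (hw1 : ∑ x, w x = 1) (hf : ∀ x, |f x| ≤ B) : ∑ x, w x * f x ^ 2 ≤ B ^ 2 :=
  calc ∑ x, w x * f x ^ 2 ≤ ∑ x, w x * B ^ 2 := Finset.sum_le_sum fun x _ =>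
        mul_le_mul_of_nonneg_left (sq_le_sq' (abs_le.mp (hf x)).1 (abs_le.mp (hf x)).2) (hw x)
    _ = B ^ 2 := by rw [← Finset.sum_mul, hw1, one_mul]

theorem abs_sum_mul_weighted_deviation_le {w h d : E → ℝ} {H D : ℝ} (hw : ∀ x, 0 ≤ w x)
    (hw1 : ∑ x, w x = 1) (hH : ∀ x, |h x| ≤ H) (hD : ∀ x, |d x| ≤ D) :
    |∑ x, h x * (w x * (∑ y, w y * d y - d x))| ≤ H * D := by
  set m := ∑ y, w y * d y
  obtain ⟨x₀⟩ : Nonempty E := Finset.univ_nonempty_iff.mp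
    (Finset.nonempty_of_sum_ne_zero (hw1.trans_ne one_ne_zero))
  have hH0 : 0 ≤ H := (abs_nonneg _).trans (hH x₀)
  have hD0 : 0 ≤ D := (abs_nonneg _).trans (hD x₀)
  have cauchy_schwarz : (∑ x, h x * (w x * (m - d x))) ^ 2
      ≤ (∑ x, w x * h x ^ 2) * ∑ x, w x * (m - d x) ^ 2 :=
    Finset.sum_sq_le_sum_mul_sum_of_sq_le_mul _ (fun x _ => mul_nonneg (hw x) (sq_nonneg _))
      (fun x _ => mul_nonneg (hw x) (sq_nonneg _)) fun x _ => le_of_eq (by ring)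
  have variance : ∑ x, w x * (m - d x) ^ 2 = ∑ x, w x * d x ^ 2 - m ^ 2 := by
    calc ∑ x, w x * (m - d x) ^ 2
        = ∑ x, (m ^ 2 * w x - 2 * m * (w x * d x) + w x * d x ^ 2) :=
          Finset.sum_congr rfl fun x _ => by ring
      _ = m ^ 2 * ∑ x, w x - 2 * m * m + ∑ x, w x * d x ^ 2 := by
          rw [Finset.sum_add_distrib, Finset.sum_sub_distrib, ← Finset.mul_sum,
            ← Finset.mul_sum]
      _ = ∑ x, w x * d x ^ 2 - m ^ 2 := by rw [hw1]; ring
  have hvar : ∑ x, w x * (m - d x) ^ 2 ≤ D ^ 2 := by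
    linarith [sq_nonneg m, sum_mul_sq_le_sq_of_abs_le hw hw1 hD]
  refine abs_le_of_sq_le_sq ?_ (mul_nonneg hH0 hD0)
  calc _ ≤ _ := cauchy_schwarz
    _ ≤ H ^ 2 * D ^ 2 := mul_le_mul (sum_mul_sq_le_sq_of_abs_le hw hw1 hH) hvar
        (Finset.sum_nonneg fun x _ => mul_nonneg (hw x) (sq_nonneg _)) (sq_nonneg H)
    _ = (H * D) ^ 2 := by ring

theorem abs_sum_mul_gibbsWeight_sub_le [Nonempty E] (a b h : E → ℝ) {H D : ℝ}
    (hH : ∀ x, |h x| ≤ H) (hD : ∀ x, |a x - b x| ≤ D) :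
    |∑ x, h x * (gibbsWeight a x - gibbsWeight b x)| ≤ H * D := by
  set d := fun x => a x - b x
  set w := fun (t : ℝ) => gibbsWeight fun y => b y + t * d y
  set F := fun (t : ℝ) => ∑ x, h x * w t x
  have hF : ∀ t, HasDerivAt F (∑ x, h x * (w t x * (∑ y, w t y * d y - d x))) t := fun t =>
    HasDerivAt.fun_sum fun x _ => (hasDerivAt_gibbsWeight_line b d x t).const_mul (h x)
  obtain ⟨c, -, hc⟩ := exists_hasDerivAt_eq_slope F _ zero_lt_one
    (fun t _ => (hF t).continuousAt.continuousWithinAt) fun t _ => hF t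
  have hF1 : F 1 = ∑ x, h x * gibbsWeight a x := by simp [F, w, d]
  have hF0 : F 0 = ∑ x, h x * gibbsWeight b x := by simp [F, w]
  calc |∑ x, h x * (gibbsWeight a x - gibbsWeight b x)| = |F 1 - F 0| := by
        rw [hF1, hF0, ← Finset.sum_sub_distrib]
        simp only [mul_sub]
    _ = |∑ x, h x * (w c x * (∑ y, w c y * d y - d x))| := by rw [hc]; norm_num
    _ ≤ H * D :=
        abs_sum_mul_weighted_deviation_le (gibbsWeight_nonneg _) (sum_gibbsWeight _) hH hD

end GibbsWeight

theorem gibbs_g_function_variation_bound_general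
    {E : Type*} [Fintype E] [Nonempty E]
    (ψ : ℕ → (ℕ → E) → ℝ)
    (M : ℕ → ℝ) (hM : ∀ j c, |ψ j c| ≤ M j) (hMsum : Summable M)
    (g : E → Regen.Past E → ℝ)
    (hg : ∀ x ω, g x ω = Real.exp (-∑' j : ℕ, ψ j (consPast x ω))
      / ∑ y : E, Real.exp (-∑' j : ℕ, ψ j (consPast y ω)))
    (h : E → ℝ) (ω σ : Regen.Past E) :
    |∑ x : E, h x * (g x ω - g x σ)|
      ≤ (⨆ x : E, |h x|)
        * ⨆ x : E, |∑' j : ℕ, (ψ j (consPast x ω) - ψ j (consPast x σ))| := by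
  have hsummable : ∀ c, Summable fun j => ψ j c := fun c =>
    Summable.of_norm_bounded hMsum fun j => hM j c
  have hbdd : ∀ f : E → ℝ, BddAbove (Set.range f) := fun f => (Set.finite_range f).bddAbove
  have hgibbs : ∀ x ω, g x ω = gibbsWeight (fun y => ∑' j, ψ j (consPast y ω)) x := hg
  simp only [hgibbs]
  refine abs_sum_mul_gibbsWeight_sub_le _ _ h (fun x => le_ciSup (hbdd fun x => |h x|) x)
    fun x => ?_
  rw [← (hsummable _).tsum_sub (hsummable _)]
  exact le_ciSup (hbdd fun x => |∑' j, (ψ j (consPast x ω) - ψ j (consPast x σ))|) x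

/-- Lemma 2 of Maillard–Schöpfer (following Simon, Lemma V.1.4): uniform bound on the
variation of a Gibbsian `g`-function in terms of the variation of the interaction. -/
theorem gibbs_g_function_variation_bound
    {E : Type*} [Fintype E] [Nonempty E] [MeasurableSpace E] [MeasurableSingletonClass E]
    (ψ : ℕ → (ℕ → E) → ℝ) (hmeas : ∀ j, Measurable (ψ j))
    (M : ℕ → ℝ) (hM : ∀ j c, |ψ j c| ≤ M j) (hMsum : Summable M)
    (g : E → Regen.Past E → ℝ)
    (hg : ∀ x ω, g x ω = Real.exp (-∑' j : ℕ, ψ j (consPast x ω))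
      / ∑ y : E, Real.exp (-∑' j : ℕ, ψ j (consPast y ω)))
    (h : E → ℝ) (ω σ : Regen.Past E) :
    |∑ x : E, h x * (g x ω - g x σ)|
      ≤ (⨆ x : E, |h x|)
        * ⨆ x : E, |∑' j : ℕ, (ψ j (consPast x ω) - ψ j (consPast x σ))| :=
  gibbs_g_function_variation_bound_general ψ M hM hMsum g hg h ω σ
end

section
/- Let E be a two-element alphabet and g a g-function on E. For k ≥ 0 define a_k = inf_{σ∈E^{[−k,−1]}} ∑_{x∈E} inf_{ω∈E^{ℤ_{<−k}}} g(x | σω) and the k-th variation var_k = sup{ |g(x | ω_{−∞}^{−1}) − g(x | σ_{−∞}^{−1})| : x ∈ E, ω, σ ∈ E^{ℤ_{<0}} with ω_{−k}^{−1} = σ_{−k}^{−1} } (for k = 0 no coordinates are required to agree). Then a_k = 1 − var_k for every k ≥ 0. -/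
open MeasureTheory ProbabilityTheory Filter Finset Topology

open MeasureTheory ProbabilityTheory Filter Finset Topology

/-!
With two letters `a ≠ b` we have `g(b | ·) = 1 - g(a | ·)`, so on every cylinder `[τ]` of length
`k` both letters have the same oscillation `sup - inf`, and
`∑ₓ inf_{[τ]} g(x | ·) = inf_{[τ]} g(a | ·) + 1 - sup_{[τ]} g(a | ·) = 1 - osc_{[τ]} g(a | ·)`.
Since two pasts agree on their last `k` letters exactly when they lie in a common cylinder,
`var_k` is the largest of these oscillations, and taking the infimum over `τ` gives the claim.
-/

namespace Regen

section Oscillation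

variable {ι : Type*}

noncomputable def osc (f : ι → ℝ) : ℝ := (⨆ i, f i) - ⨅ i, f i

variable {f : ι → ℝ}

theorem abs_sub_le_osc (hfa : BddAbove (Set.range f)) (hfb : BddBelow (Set.range f)) (i j : ι) :
    |f i - f j| ≤ osc f := by
  have hi := le_ciSup hfa i
  have hj := ciInf_le hfb j
  have hi' := ciInf_le hfb i
  have hj' := le_ciSup hfa j
  rw [osc, abs_sub_le_iff]
  constructor <;> linarith

variable [Nonempty ι]

theorem sub_ciSup (hf : BddAbove (Set.range f)) (c : ℝ) : c - ⨆ i, f i = ⨅ i, c - f i :=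
  (OrderIso.subLeft c).map_ciSup hf

theorem sub_ciInf (hf : BddBelow (Set.range f)) (c : ℝ) : c - ⨅ i, f i = ⨆ i, c - f i :=
  (OrderIso.subLeft c).map_ciInf hf

theorem osc_const_sub (hfa : BddAbove (Set.range f)) (hfb : BddBelow (Set.range f)) (c : ℝ) :
    osc (fun i => c - f i) = osc f := by
  rw [osc, osc, ← sub_ciSup hfa, ← sub_ciInf hfb]
  ring

theorem osc_le_of_forall_sub_le {d : ℝ} (h : ∀ i j, f i - f j ≤ d) : osc f ≤ d := by
  have h' : ∀ i, f i - d ≤ ⨅ j, f j := fun i => le_ciInf fun j => by linarith [h i j]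
  have : ⨆ i, f i ≤ d + ⨅ j, f j := ciSup_le fun i => by linarith [h' i]
  rw [osc]
  linarith

end Oscillation

section Cylinder

variable {E : Type*}

def concatPast (k : ℕ) (τ : Fin k → E) (ω : Past E) : Past E :=
  fun n => if h : n < k then τ ⟨n, h⟩ else ω (n - k)

theorem aSeq_eq_iInf_sum_iInf_concatPast [Fintype E] (g : E → Past E → ℝ) (k : ℕ) :
    aSeq g k = ⨅ τ : Fin k → E, ∑ x : E, ⨅ ω, g x (concatPast k τ ω) :=
  rfl

theorem agree_iff_exists_concatPast {k : ℕ} {ω σ : Past E} :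
    (∀ i < k, ω i = σ i) ↔
      ∃ τ ω' σ', concatPast k τ ω' = ω ∧ concatPast k τ σ' = σ := by
  constructor
  · intro h
    have take_drop : ∀ ρ : Past E, (∀ i < k, ω i = ρ i) →
        concatPast k (fun i => ω i) (fun n => ρ (n + k)) = ρ := by
      intro ρ hρ
      funext n
      by_cases hn : n < k
      · simp only [concatPast, dif_pos hn, hρ n hn]
      · simp only [concatPast, dif_neg hn, Nat.sub_add_cancel (not_lt.1 hn)]
    exact ⟨_, _, _, take_drop ω fun _ _ => rfl, take_drop σ h⟩
  · rintro ⟨τ, ω', σ', rfl, rfl⟩ i hi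
    simp only [concatPast, dif_pos hi]

theorem varSeq_eq_iSup_osc [Finite E] [Nonempty E] {g : E → Past E → ℝ}
    (hga : ∀ x, BddAbove (Set.range (g x))) (hgb : ∀ x, BddBelow (Set.range (g x))) (k : ℕ) :
    varSeq g k = ⨆ τ : Fin k → E, ⨆ x, osc fun ω => g x (concatPast k τ ω) := by
  rw [varSeq]
  set S := {d : ℝ | ∃ x : E, ∃ ω σ : Past E, (∀ i < k, ω i = σ i) ∧ d = |g x ω - g x σ|}
  set M := ⨆ τ : Fin k → E, ⨆ x, osc fun ω => g x (concatPast k τ ω)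
  have le_M : ∀ d ∈ S, d ≤ M := by
    rintro d ⟨x, ω, σ, hωσ, rfl⟩
    obtain ⟨τ, ω', σ', rfl, rfl⟩ := agree_iff_exists_concatPast.1 hωσ
    calc |g x (concatPast k τ ω') - g x (concatPast k τ σ')|
        ≤ osc fun ω => g x (concatPast k τ ω) :=
          abs_sub_le_osc ((hga x).mono (Set.range_comp_subset_range _ _))
            ((hgb x).mono (Set.range_comp_subset_range _ _)) ω' σ'
      _ ≤ ⨆ x, osc fun ω => g x (concatPast k τ ω) :=
          le_ciSup (f := fun x => osc fun ω => g x (concatPast k τ ω)) (Finite.bddAbove_range _) x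
      _ ≤ M :=
          le_ciSup (f := fun τ => ⨆ x, osc fun ω => g x (concatPast k τ ω))
            (Finite.bddAbove_range _) τ
  have zero_mem : (0 : ℝ) ∈ S :=
    ⟨Classical.arbitrary E, Classical.arbitrary _, _, fun _ _ => rfl, by simp⟩
  refine le_antisymm (csSup_le ⟨0, zero_mem⟩ le_M) (ciSup_le fun τ => ciSup_le fun x => ?_)
  refine osc_le_of_forall_sub_le fun ω σ => (le_abs_self _).trans (le_csSup ⟨M, le_M⟩ ?_)
  exact ⟨x, _, _, agree_iff_exists_concatPast.2 ⟨τ, ω, σ, rfl, rfl⟩, rfl⟩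

end Cylinder

theorem sum_eq_add_of_forall_eq_or_eq {E M : Type*} [Fintype E] [AddCommMonoid M] {a b : E}
    (hab : a ≠ b) (hall : ∀ x, x = a ∨ x = b) (f : E → M) : ∑ x, f x = f a + f b :=
  Fintype.sum_eq_add a b hab fun x hx => ((hall x).elim hx.1 hx.2).elim

namespace IsGFunction

variable {E : Type*} [Fintype E] [MeasurableSpace E] {g : E → Past E → ℝ}

theorem le_one (hg : IsGFunction g) (x : E) (ω : Past E) : g x ω ≤ 1 :=
  hg.sum_one ω ▸ Finset.single_le_sum (fun y _ => hg.nonneg y ω) (Finset.mem_univ x)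

theorem bddAbove_range (hg : IsGFunction g) (x : E) : BddAbove (Set.range (g x)) :=
  ⟨1, Set.forall_mem_range.2 (hg.le_one x)⟩

theorem bddBelow_range (hg : IsGFunction g) (x : E) : BddBelow (Set.range (g x)) :=
  ⟨0, Set.forall_mem_range.2 (hg.nonneg x)⟩

variable {a b : E}

theorem apply_eq_one_sub_of_two_letters (hg : IsGFunction g) (hab : a ≠ b)
    (hall : ∀ x, x = a ∨ x = b) (ω : Past E) : g b ω = 1 - g a ω := by
  have := hg.sum_one ω
  rw [sum_eq_add_of_forall_eq_or_eq hab hall] at this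
  linarith

variable {ι : Type*} [Nonempty ι]

theorem sum_ciInf_comp_eq_one_sub_osc (hg : IsGFunction g) (hab : a ≠ b)
    (hall : ∀ x, x = a ∨ x = b) (c : ι → Past E) :
    ∑ x, ⨅ i, g x (c i) = 1 - osc fun i => g a (c i) := by
  have hbdd : BddAbove (Set.range fun i => g a (c i)) :=
    (hg.bddAbove_range a).mono (Set.range_comp_subset_range _ _)
  simp only [sum_eq_add_of_forall_eq_or_eq hab hall, hg.apply_eq_one_sub_of_two_letters hab hall,
    ← sub_ciSup hbdd, osc]
  ring

theorem iSup_osc_comp_eq (hg : IsGFunction g) (hab : a ≠ b)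
    (hall : ∀ x, x = a ∨ x = b) (c : ι → Past E) :
    ⨆ x, (osc fun i => g x (c i)) = osc fun i => g a (c i) := by
  have hb : (osc fun i => g b (c i)) = osc fun i => g a (c i) := by
    simp only [hg.apply_eq_one_sub_of_two_letters hab hall]
    exact osc_const_sub ((hg.bddAbove_range a).mono (Set.range_comp_subset_range _ _))
      ((hg.bddBelow_range a).mono (Set.range_comp_subset_range _ _)) 1
  have hx : ∀ x, (osc fun i => g x (c i)) = osc fun i => g a (c i) := by
    intro x
    rcases hall x with rfl | rfl
    · rfl
    · exact hb
  have : Nonempty E := ⟨a⟩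
  simp only [hx, ciSup_const]

end IsGFunction

end Regen

theorem aSeq_eq_one_sub_varSeq_of_two_letters_general
    {E : Type*} [Fintype E] [MeasurableSpace E]
    (hcard : Fintype.card E = 2)
    (g : E → Regen.Past E → ℝ) (hg : Regen.IsGFunction g) (k : ℕ) :
    Regen.aSeq g k = 1 - Regen.varSeq g k := by
  obtain ⟨a, b, hab, hpair⟩ := Nat.card_eq_two_iff.1 (Nat.card_eq_fintype_card.trans hcard)
  have hall : ∀ x, x = a ∨ x = b := fun x => hpair.ge (Set.mem_univ x)
  have : Nonempty E := ⟨a⟩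
  rw [Regen.aSeq_eq_iInf_sum_iInf_concatPast,
    Regen.varSeq_eq_iSup_osc hg.bddAbove_range hg.bddBelow_range,
    Regen.sub_ciSup (Finite.bddAbove_range _)]
  simp only [hg.sum_ciInf_comp_eq_one_sub_osc hab hall, hg.iSup_osc_comp_eq hab hall]

/-- Equation (akvark) of Maillard–Schöpfer: for a two-letter alphabet, `a_k = 1 - var_k`. -/
theorem aSeq_eq_one_sub_varSeq_of_two_letters
    {E : Type*} [Fintype E] [Nonempty E] [MeasurableSpace E] [MeasurableSingletonClass E]
    (hcard : Fintype.card E = 2)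
    (g : E → Regen.Past E → ℝ) (hg : Regen.IsGFunction g) (k : ℕ) :
    Regen.aSeq g k = 1 - Regen.varSeq g k :=
  aSeq_eq_one_sub_varSeq_of_two_letters_general hcard g hg k
end
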